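/- Let v : Fin 5 → ℝ³ be five points in general position (every four of them affinely independent). Then there is at most one unordered pair of distinct indices {i, j} such that the open segment from v i to v j meets the intrinsic interior of the triangle formed as the convex hull of the remaining three points: if both the pair {i, j} and the pair {k, l} have this property, then {i, j} = {k, l} as unordered pairs. -/
import Mathlib

open Finset

/-- Any affine dependence of the five points vanishing at one index vanishes. -/
private lemma depZero (v : Fin 5 → EuclideanSpace ℝ (Fin 3))
    (hgp : ∀ i : Fin 5, AffineIndependent ℝ (fun j : {j : Fin 5 // j ≠ i} => v j))
    (m : Fin 5) (w : Fin 5 → ℝ) (hs : ∑ n, w n = 0)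
    (hv : ∑ n, w n • v n = 0) (hm : w m = 0) : ∀ n, w n = 0 := by
  have hsub : ∀ {M : Type} [AddCommMonoid M] (f : Fin 5 → M), f m = 0 →
      ∑ n : {j : Fin 5 // j ≠ m}, f n.1 = ∑ n, f n := by
    intro M _ f hf
    rw [← Finset.sum_subtype (Finset.univ.filter (· ≠ m)) (fun x => by simp) f,
      Finset.filter_ne', ← Finset.sum_erase_add Finset.univ f (Finset.mem_univ m), hf, add_zero]
  have key := affineIndependent_iff.1 (hgp m) Finset.univ (fun n => w n.1)
    (by rw [hsub w hm]; exact hs)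
    (by rw [hsub (fun n => w n • v n) (by simp [hm])]; exact hv)
  intro n
  by_cases hn : n = m
  · rw [hn]; exact hm
  · exact key ⟨n, hn⟩ (Finset.mem_univ _)

private lemma vinj (v : Fin 5 → EuclideanSpace ℝ (Fin 3))
    (hgp : ∀ i : Fin 5, AffineIndependent ℝ (fun j : {j : Fin 5 // j ≠ i} => v j)) :
    Function.Injective v := by
  intro a b hab
  by_contra hne
  have hcard : ({a, b} : Finset (Fin 5)).card ≤ 2 := by
    refine le_trans (Finset.card_insert_le _ _) ?_
    simp
  have hpos : 0 < (({a, b} : Finset (Fin 5))ᶜ).card := by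
    rw [Finset.card_compl]
    simp only [Fintype.card_fin]
    omega
  obtain ⟨m, hm⟩ := Finset.card_pos.1 hpos
  simp only [Finset.mem_compl, Finset.mem_insert, Finset.mem_singleton, not_or] at hm
  have h2 : (fun j : {j : Fin 5 // j ≠ m} => v j.1) ⟨a, fun h => hm.1 h.symm⟩ =
      (fun j : {j : Fin 5 // j ≠ m} => v j.1) ⟨b, fun h => hm.2 h.symm⟩ := hab
  have := (hgp m).injective h2
  exact hne (congrArg Subtype.val this)

/-- From a point of the open segment lying in the triangle, produce an affine dependence
positive exactly on `{i, j}`. -/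
private lemma pierce_dep (v : Fin 5 → EuclideanSpace ℝ (Fin 3))
    (hgp : ∀ i : Fin 5, AffineIndependent ℝ (fun j : {j : Fin 5 // j ≠ i} => v j))
    (i j : Fin 5) (hij : i ≠ j)
    (h : (openSegment ℝ (v i) (v j) ∩
      intrinsicInterior ℝ (convexHull ℝ (v '' {m | m ≠ i ∧ m ≠ j}))) ≠ ∅) :
    ∃ d : Fin 5 → ℝ, (∑ n, d n = 0) ∧ (∑ n, d n • v n = 0) ∧ 0 < d i ∧ 0 < d j ∧
      ∀ n, n ≠ i → n ≠ j → d n < 0 := by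
  classical
  obtain ⟨p, hp1, hp2⟩ := Set.nonempty_iff_ne_empty.2 h
  have hp2' : p ∈ convexHull ℝ (v '' {m | m ≠ i ∧ m ≠ j}) :=
    intrinsicInterior_subset hp2
  obtain ⟨a, b, ha, hb, hab, hsum⟩ := hp1
  -- weights for the convex hull point
  have hset : v '' {m | m ≠ i ∧ m ≠ j} = ↑((({i, j} : Finset (Fin 5))ᶜ).image v) := by
    ext x
    simp only [Set.mem_image, Set.mem_setOf_eq, Finset.coe_image, Finset.coe_compl,
      Finset.coe_insert, Finset.coe_singleton, Set.mem_image, Set.mem_compl_iff,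
      Set.mem_insert_iff, Set.mem_singleton_iff, not_or]
  rw [hset, Finset.convexHull_eq] at hp2'
  obtain ⟨w, hw0, hw1, hwc⟩ := hp2'
  have hinj := vinj v hgp
  set s : Finset (Fin 5) := ({i, j} : Finset (Fin 5))ᶜ with hs
  set u : Fin 5 → ℝ := fun n => if n ∈ s then w (v n) else 0 with hu
  have husum : ∑ n, u n = 1 := by
    have : ∑ n, u n = ∑ n ∈ s, w (v n) := by
      rw [hu]
      rw [Finset.sum_ite_mem, Finset.univ_inter]
    rw [this, ← Finset.sum_image (fun x _ y _ h => hinj h)]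
    exact hw1
  have huvec : ∑ n, u n • v n = p := by
    have h1 : ∑ n, u n • v n = ∑ n ∈ s, w (v n) • v n := by
      rw [hu]
      simp only [ite_smul, zero_smul]
      rw [Finset.sum_ite_mem, Finset.univ_inter]
    have h2 : ∑ n ∈ s, w (v n) • v n = ∑ y ∈ s.image v, w y • y :=
      (Finset.sum_image (f := fun y => w y • y) (fun x _ y _ h => hinj h)).symm
    rw [Finset.centerMass_eq_of_sum_1 _ id hw1] at hwc
    rw [h1, h2]
    simpa using hwc
  have hui : u i = 0 := by
    rw [hu]
    simp [hs]
  have huj : u j = 0 := by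
    rw [hu]
    simp [hs]
  have hu0 : ∀ n, 0 ≤ u n := by
    intro n
    by_cases hn : n ∈ s
    · rw [hu]
      simp only [hn, if_true]
      exact hw0 _ (Finset.mem_image_of_mem v hn)
    · rw [hu]
      simp [hn]
  set d : Fin 5 → ℝ := fun n => (if n = i then a else 0) + (if n = j then b else 0) - u n with hd
  have hdsum : ∑ n, d n = 0 := by
    rw [hd]
    simp only [Finset.sum_sub_distrib, Finset.sum_add_distrib, Finset.sum_ite_eq',
      Finset.mem_univ, if_true, husum]
    linarith
  have hdvec : ∑ n, d n • v n = 0 := by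
    rw [hd]
    simp only [sub_smul, add_smul, ite_smul, zero_smul, Finset.sum_sub_distrib,
      Finset.sum_add_distrib, Finset.sum_ite_eq', Finset.mem_univ, if_true, huvec]
    rw [hsum]
    abel
  have hdi : d i = a := by rw [hd]; simp [hij, hui]
  have hdj : d j = b := by rw [hd]; simp [Ne.symm hij, huj]
  refine ⟨d, hdsum, hdvec, by rw [hdi]; exact ha, by rw [hdj]; exact hb, ?_⟩
  intro n hni hnj
  have hdn : d n = -u n := by rw [hd]; simp [hni, hnj]
  have hne : d n ≠ 0 := by
    intro h0
    have := depZero v hgp n d hdsum hdvec h0 i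
    rw [hdi] at this
    exact absurd this (ne_of_gt ha)
  have : 0 ≤ u n := hu0 n
  rw [hdn] at hne ⊢
  rcases lt_or_eq_of_le this with h | h
  · linarith
  · exact absurd h.symm (by simpa using hne)

/-- Uniqueness in the classification of linear embeddings of K₅ in general position: at
most one unordered pair of the five points spans an open edge piercing the relative
interior of the triangle spanned by the remaining three points. -/
theorem K5_piercing_edge_unique
    (v : Fin 5 → EuclideanSpace ℝ (Fin 3))
    (hgp : ∀ i : Fin 5, AffineIndependent ℝ (fun j : {j : Fin 5 // j ≠ i} => v j))
    (i j k l : Fin 5) (hij : i ≠ j) (hkl : k ≠ l)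
    (h₁ : (openSegment ℝ (v i) (v j) ∩
      intrinsicInterior ℝ (convexHull ℝ (v '' {m | m ≠ i ∧ m ≠ j}))) ≠ ∅)
    (h₂ : (openSegment ℝ (v k) (v l) ∩
      intrinsicInterior ℝ (convexHull ℝ (v '' {m | m ≠ k ∧ m ≠ l}))) ≠ ∅) :
    ({i, j} : Finset (Fin 5)) = {k, l} := by
  obtain ⟨d₁, hd₁s, hd₁v, hd₁i, hd₁j, hd₁n⟩ := pierce_dep v hgp i j hij h₁
  obtain ⟨d₂, hd₂s, hd₂v, hd₂k, hd₂l, hd₂n⟩ := pierce_dep v hgp k l hkl h₂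
  have hprop : ∀ n, d₁ i * d₂ n = d₂ i * d₁ n := by
    have key := depZero v hgp i (fun n => d₁ i * d₂ n - d₂ i * d₁ n)
      (by simp only [Finset.sum_sub_distrib, ← Finset.mul_sum, hd₁s, hd₂s]; ring)
      (by
        simp only [sub_smul, mul_smul, Finset.sum_sub_distrib, ← Finset.smul_sum, hd₁v, hd₂v,
          smul_zero, sub_zero])
      (by ring)
    intro n
    have h := key n
    linarith
  have hd2i : d₂ i ≠ 0 := by
    intro h0
    have := depZero v hgp i d₂ hd₂s hd₂v h0 k
    exact absurd this (ne_of_gt hd₂k)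
  rcases lt_or_gt_of_ne hd2i with hneg | hpos
  · exfalso
    have hsub : (({i, j} : Finset (Fin 5))ᶜ) ⊆ ({k, l} : Finset (Fin 5)) := by
      intro n hn
      simp only [Finset.mem_compl, Finset.mem_insert, Finset.mem_singleton, not_or] at hn
      have h1 : d₁ n < 0 := hd₁n n hn.1 hn.2
      have h2 : 0 < d₂ n := by nlinarith [hprop n]
      by_contra hn2
      simp only [Finset.mem_insert, Finset.mem_singleton, not_or] at hn2
      have := hd₂n n hn2.1 hn2.2
      linarith
    have c1 : (({i, j} : Finset (Fin 5))ᶜ).card = 3 := by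
      rw [Finset.card_compl, Finset.card_insert_of_notMem (by simpa using hij),
        Finset.card_singleton]
      rfl
    have c2 : ({k, l} : Finset (Fin 5)).card ≤ 2 := by
      refine le_trans (Finset.card_insert_le _ _) ?_
      simp
    have := Finset.card_le_card hsub
    omega
  · have hiff : ∀ n, 0 < d₁ n ↔ 0 < d₂ n := by
      intro n
      have := hprop n
      constructor <;> intro h <;> nlinarith
    ext n
    simp only [Finset.mem_insert, Finset.mem_singleton]
    constructor
    · rintro (rfl | rfl)
      · by_contra hc
        push_neg at hc
        have := hd₂n n hc.1 hc.2
        have := (hiff n).1 hd₁i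
        linarith
      · by_contra hc
        push_neg at hc
        have := hd₂n n hc.1 hc.2
        have := (hiff n).1 hd₁j
        linarith
    · rintro (rfl | rfl)
      · by_contra hc
        push_neg at hc
        have := hd₁n n hc.1 hc.2
        have := (hiff n).2 hd₂k
        linarith
      · by_contra hc
        push_neg at hc
        have := hd₁n n hc.1 hc.2
        have := (hiff n).2 hd₂l
        linarith
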